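/- arXiv:2605.22171 — 2 statements merged into one kernel-verified Lean document; each statement's English description precedes it below -/
import Mathlib

section
/- Let S be a symmetric (m+n)×(m+n) real matrix with block structure S = [[A, C],[Cᵀ, B]] where A is m×m symmetric, B is n×n symmetric, and C is m×n. Suppose λ_max(A) ≤ -c_θ, λ_max(B) ≤ -c_V, and ‖C‖₂ ≤ β for constants c_θ, c_V > 0 and β ≥ 0. Then λ_max(S) ≤ ½(-(c_θ + c_V) + √((c_θ - c_V)² + 4β²)). -/
open Matrix Finset

/-- Euclidean norm of a finitely-indexed real vector. -/
noncomputable def euclNorm {n : Type*} [Fintype n] (x : n → ℝ) : ℝ :=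
  Real.sqrt (∑ i, x i ^ 2)

/-- Largest eigenvalue of a (Hermitian = real symmetric) matrix. -/
noncomputable def lamMax {n : Type*} [Fintype n] [DecidableEq n] [Nonempty n]
    {A : Matrix n n ℝ} (hA : A.IsHermitian) : ℝ :=
  ⨆ i, hA.eigenvalues i

/-- Operator 2-norm of a rectangular real matrix. -/
noncomputable def opNorm2 {m n : Type*} [Fintype m] [Fintype n] (C : Matrix m n ℝ) : ℝ :=
  sSup {r | ∃ x : n → ℝ, euclNorm x ≤ 1 ∧ r = euclNorm (C.mulVec x)}

/-! The bound follows from the blockwise estimate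
`zᵀ S z ≤ -c_θ ‖x‖² + 2 β ‖x‖ ‖y‖ - c_V ‖y‖²` for `z = (x, y)`: the right-hand side is the quadratic
form of `M_c = [[-c_θ, β], [β, -c_V]]` at `(‖x‖, ‖y‖)`, hence at most `λ_max(M_c) (‖x‖² + ‖y‖²)`,
and `λ_max(S)` is the best constant in `zᵀ S z ≤ λ ‖z‖²`. -/

section EuclideanNorm

variable {m n : Type*} [Fintype m] [Fintype n]

lemma euclNorm_eq_norm_toLp (x : n → ℝ) : euclNorm x = ‖WithLp.toLp 2 x‖ := by
  simp [euclNorm, EuclideanSpace.norm_eq]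

lemma euclNorm_nonneg (x : n → ℝ) : 0 ≤ euclNorm x :=
  Real.sqrt_nonneg _

lemma dotProduct_self_eq_euclNorm_sq (x : n → ℝ) : x ⬝ᵥ x = euclNorm x ^ 2 := by
  rw [euclNorm, Real.sq_sqrt (by positivity)]
  simp [dotProduct, sq]

lemma dotProduct_le_euclNorm_mul_euclNorm (x y : n → ℝ) : x ⬝ᵥ y ≤ euclNorm x * euclNorm y :=
  Real.sum_mul_le_sqrt_mul_sqrt _ _ _

open scoped Matrix.Norms.L2Operator in
lemma opNorm2_eq_l2_opNorm [DecidableEq n] (C : Matrix m n ℝ) : opNorm2 C = ‖C‖ := by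
  rw [l2_opNorm_def, ← ContinuousLinearMap.sSup_unitClosedBall_eq_norm, opNorm2]
  congr 1
  ext r
  simp only [euclNorm_eq_norm_toLp, Set.mem_ofPred_eq, Set.mem_image, Metric.mem_closedBall,
    dist_zero_right, LinearEquiv.trans_apply, LinearMap.coe_toContinuousLinearMap']
  constructor
  · rintro ⟨x, hx, rfl⟩
    exact ⟨WithLp.toLp 2 x, hx, by simp⟩
  · rintro ⟨x, hx, rfl⟩
    exact ⟨x.ofLp, hx, by simp [toLpLin_apply]⟩

open scoped Matrix.Norms.L2Operator in
lemma euclNorm_mulVec_le_opNorm2_mul (C : Matrix m n ℝ) (x : n → ℝ) :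
    euclNorm (C *ᵥ x) ≤ opNorm2 C * euclNorm x := by
  classical
  simpa [opNorm2_eq_l2_opNorm, euclNorm_eq_norm_toLp] using C.l2_opNorm_mulVec (WithLp.toLp 2 x)

lemma dotProduct_mulVec_le_of_opNorm2_le {C : Matrix m n ℝ} {β : ℝ} (hC : opNorm2 C ≤ β)
    (x : m → ℝ) (y : n → ℝ) : x ⬝ᵥ (C *ᵥ y) ≤ β * (euclNorm x * euclNorm y) :=
  calc x ⬝ᵥ (C *ᵥ y) ≤ euclNorm x * euclNorm (C *ᵥ y) := dotProduct_le_euclNorm_mul_euclNorm _ _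
    _ ≤ euclNorm x * (β * euclNorm y) := by
      gcongr
      · exact euclNorm_nonneg x
      · exact (euclNorm_mulVec_le_opNorm2_mul C y).trans
          (mul_le_mul_of_nonneg_right hC (euclNorm_nonneg y))
    _ = β * (euclNorm x * euclNorm y) := by ring

end EuclideanNorm

section LamMax

variable {n : Type*} [Fintype n] [DecidableEq n] [Nonempty n] {A : Matrix n n ℝ}

lemma eigenvalues_le_lamMax (hA : A.IsHermitian) (i : n) : hA.eigenvalues i ≤ lamMax hA :=
  le_ciSup (Set.finite_range _).bddAbove i

/-- `λ_max • 1 - A` has nonnegative spectrum, hence is positive semidefinite. -/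
lemma dotProduct_mulVec_le_lamMax_mul (hA : A.IsHermitian) (x : n → ℝ) :
    x ⬝ᵥ (A *ᵥ x) ≤ lamMax hA * (x ⬝ᵥ x) := by
  have hpsd : (algebraMap ℝ (Matrix n n ℝ) (lamMax hA) - A).PosSemidef := by
    refine posSemidef_iff_isHermitian_and_spectrum_nonneg.mpr ⟨(isHermitian_diagonal _).sub hA, ?_⟩
    rw [← spectrum.singleton_sub_eq, hA.spectrum_real_eq_range_eigenvalues]
    rintro _ ⟨_, rfl, _, ⟨i, rfl⟩, rfl⟩
    exact sub_nonneg.mpr (eigenvalues_le_lamMax hA i)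
  have := hpsd.dotProduct_mulVec_nonneg x
  rw [Algebra.algebraMap_eq_smul_one, sub_mulVec, smul_mulVec, one_mulVec, star_trivial,
    dotProduct_sub, dotProduct_smul, smul_eq_mul] at this
  linarith

lemma dotProduct_mulVec_le_of_lamMax_le (hA : A.IsHermitian) {c : ℝ} (h : lamMax hA ≤ c)
    (x : n → ℝ) : x ⬝ᵥ (A *ᵥ x) ≤ c * euclNorm x ^ 2 := by
  rw [← dotProduct_self_eq_euclNorm_sq]
  exact (dotProduct_mulVec_le_lamMax_mul hA x).trans
    (mul_le_mul_of_nonneg_right h (by rw [dotProduct_self_eq_euclNorm_sq]; positivity))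

lemma lamMax_le_of_forall_dotProduct_mulVec_le (hA : A.IsHermitian) {μ : ℝ}
    (h : ∀ x, x ⬝ᵥ (A *ᵥ x) ≤ μ * (x ⬝ᵥ x)) : lamMax hA ≤ μ := by
  refine ciSup_le fun i => ?_
  have hunit : (hA.eigenvectorBasis i).ofLp ⬝ᵥ (hA.eigenvectorBasis i).ofLp = 1 := by
    have h := real_inner_self_eq_norm_sq (hA.eigenvectorBasis i)
    rwa [hA.eigenvectorBasis.orthonormal.1 i, one_pow, EuclideanSpace.inner_eq_star_dotProduct,
      star_trivial] at h
  simpa [hA.mulVec_eigenvectorBasis, hunit] using h (hA.eigenvectorBasis i).ofLp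

end LamMax

lemma sumElim_dotProduct_fromBlocks_mulVec {m n R : Type*} [Fintype m] [Fintype n] [CommRing R]
    (A : Matrix m m R) (B : Matrix n n R) (C : Matrix m n R) (x : m → R) (y : n → R) :
    Sum.elim x y ⬝ᵥ (fromBlocks A C Cᵀ B *ᵥ Sum.elim x y) =
      x ⬝ᵥ (A *ᵥ x) + 2 * (x ⬝ᵥ (C *ᵥ y)) + y ⬝ᵥ (B *ᵥ y) := by
  have hsymm : y ⬝ᵥ (Cᵀ *ᵥ x) = x ⬝ᵥ (C *ᵥ y) := by
    rw [dotProduct_mulVec, vecMul_transpose, dotProduct_comm]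
  rw [fromBlocks_mulVec, sumElim_dotProduct_sumElim]
  simp only [Sum.elim_comp_inl, Sum.elim_comp_inr, dotProduct_add, hsymm]
  ring

/-- The largest eigenvalue of the symmetric matrix `[[p, r], [r, q]]`. -/
noncomputable def lamMax₂ (p q r : ℝ) : ℝ :=
  (p + q + √((p - q) ^ 2 + 4 * r ^ 2)) / 2

lemma two_mul_mul_le_of_mul_eq_sq {s t r : ℝ} (hs : 0 ≤ s) (ht : 0 ≤ t) (h : s * t = r ^ 2)
    (a b : ℝ) : 2 * r * (a * b) ≤ s * a ^ 2 + t * b ^ 2 := by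
  rcases hs.eq_or_lt with rfl | hs
  · obtain rfl : r = 0 := by simpa using h.symm
    simp only [mul_zero, zero_mul, zero_add]
    positivity
  · refine le_of_mul_le_mul_left ?_ hs
    nlinarith [sq_nonneg (s * a - r * b)]

lemma quadratic_le_lamMax₂ (p q r a b : ℝ) :
    p * a ^ 2 + 2 * r * (a * b) + q * b ^ 2 ≤ lamMax₂ p q r * (a ^ 2 + b ^ 2) := by
  have hD : √((p - q) ^ 2 + 4 * r ^ 2) ^ 2 = (p - q) ^ 2 + 4 * r ^ 2 :=
    Real.sq_sqrt (by positivity)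
  have hpq : |p - q| ≤ √((p - q) ^ 2 + 4 * r ^ 2) := Real.abs_le_sqrt (by nlinarith)
  have hp : 0 ≤ lamMax₂ p q r - p := by
    rw [lamMax₂]; linarith [le_abs_self (p - q)]
  have hq : 0 ≤ lamMax₂ p q r - q := by
    rw [lamMax₂]; linarith [neg_le_abs (p - q)]
  have hdet : (lamMax₂ p q r - p) * (lamMax₂ p q r - q) = r ^ 2 := by
    rw [lamMax₂]; linear_combination hD / 4
  linarith [two_mul_mul_le_of_mul_eq_sq hp hq hdet a b]

theorem stmt0_general {m n : ℕ} [NeZero m] [NeZero n]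
    (A : Matrix (Fin m) (Fin m) ℝ) (B : Matrix (Fin n) (Fin n) ℝ)
    (C : Matrix (Fin m) (Fin n) ℝ)
    (hA : A.IsHermitian) (hB : B.IsHermitian)
    (hS : (Matrix.fromBlocks A C Cᵀ B).IsHermitian)
    (cθ cV β : ℝ)
    (hAmax : lamMax hA ≤ -cθ) (hBmax : lamMax hB ≤ -cV)
    (hC : opNorm2 C ≤ β) :
    lamMax hS ≤ (1/2) * (-(cθ + cV) + Real.sqrt ((cθ - cV)^2 + 4*β^2)) := by
  have hμ : (1/2) * (-(cθ + cV) + Real.sqrt ((cθ - cV)^2 + 4*β^2)) = lamMax₂ (-cθ) (-cV) β := by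
    rw [lamMax₂, show (-cθ - -cV) ^ 2 = (cθ - cV) ^ 2 by ring]
    ring
  rw [hμ]
  refine lamMax_le_of_forall_dotProduct_mulVec_le hS fun z => ?_
  obtain ⟨x, y, rfl⟩ : ∃ x y, z = Sum.elim x y := ⟨_, _, (Sum.elim_comp_inl_inr z).symm⟩
  rw [sumElim_dotProduct_fromBlocks_mulVec, sumElim_dotProduct_sumElim,
    dotProduct_self_eq_euclNorm_sq, dotProduct_self_eq_euclNorm_sq]
  linarith [dotProduct_mulVec_le_of_lamMax_le hA hAmax x,
    dotProduct_mulVec_le_of_lamMax_le hB hBmax y, dotProduct_mulVec_le_of_opNorm2_le hC x y,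
    quadratic_le_lamMax₂ (-cθ) (-cV) β (euclNorm x) (euclNorm y)]

theorem stmt0 {m n : ℕ} [NeZero m] [NeZero n]
    (A : Matrix (Fin m) (Fin m) ℝ) (B : Matrix (Fin n) (Fin n) ℝ)
    (C : Matrix (Fin m) (Fin n) ℝ)
    (hA : A.IsHermitian) (hB : B.IsHermitian)
    (hS : (Matrix.fromBlocks A C Cᵀ B).IsHermitian)
    (cθ cV β : ℝ) (hcθ : 0 < cθ) (hcV : 0 < cV) (hβ : 0 ≤ β)
    (hAmax : lamMax hA ≤ -cθ) (hBmax : lamMax hB ≤ -cV)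
    (hC : opNorm2 C ≤ β) :
    lamMax hS ≤ (1/2) * (-(cθ + cV) + Real.sqrt ((cθ - cV)^2 + 4*β^2)) :=
  stmt0_general A B C hA hB hS cθ cV β hAmax hBmax hC
end

section
/- Let R_θ be an (N-1)×N matrix with orthonormal rows spanning 1_N^⊥, let L_sym and ⎯L be symmetric Laplacian matrices with L_sym - ⎯L positive semidefinite, and let Δ be a diagonal matrix with max_i Δ_ii ≤ δ. If λ₂(⎯L) > δ, then λ_max(R_θ(-L_sym + Δ)R_θᵀ) ≤ -(λ₂(⎯L) - δ) < 0. -/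
/- Every eigenvalue of `Rθ (-L_sym + Δ) Rθᵀ` is a Rayleigh quotient `yᵀ Rθ (-L_sym + Δ) Rθᵀ y`
with `‖y‖ = 1`.  Since `Rθ` has orthonormal rows orthogonal to `1_N`, the vector `x = Rθᵀ y` is a
unit vector in `1_N^⊥`, so the quotient equals `-xᵀ L_sym x + xᵀ Δ x ≤ -xᵀ L̄ x + δ ≤ -λ₂(L̄) + δ`. -/

open Matrix Finset

/-- Second-smallest eigenvalue (algebraic connectivity) of a Laplacian, as the
minimum Rayleigh quotient over unit vectors orthogonal to the all-ones vector. -/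
noncomputable def lambda2 {N : ℕ} (L : Matrix (Fin N) (Fin N) ℝ) : ℝ :=
  sInf {r | ∃ v : Fin N → ℝ, euclNorm v = 1 ∧ (∑ i, v i) = 0 ∧ r = v ⬝ᵥ L.mulVec v}

section Compression

variable {m n R : Type*} [Fintype m] [Fintype n]

theorem dotProduct_mulVec_mul_mul_transpose [CommSemiring R] (A : Matrix m n R)
    (M : Matrix n n R) (y : m → R) :
    y ⬝ᵥ (A * M * Aᵀ) *ᵥ y = (Aᵀ *ᵥ y) ⬝ᵥ M *ᵥ (Aᵀ *ᵥ y) := by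
  rw [← mulVec_mulVec, ← mulVec_mulVec, dotProduct_mulVec, ← mulVec_transpose]

theorem dotProduct_self_transpose_mulVec [CommSemiring R] [DecidableEq n] [DecidableEq m]
    {A : Matrix m n R} (hA : A * Aᵀ = 1) (y : m → R) :
    (Aᵀ *ᵥ y) ⬝ᵥ (Aᵀ *ᵥ y) = y ⬝ᵥ y := by
  simpa [hA] using (dotProduct_mulVec_mul_mul_transpose A 1 y).symm

theorem sum_transpose_mulVec_eq_zero [CommSemiring R] {A : Matrix m n R}
    (hA : A *ᵥ (fun _ => 1) = 0) (y : m → R) : ∑ j, (Aᵀ *ᵥ y) j = 0 := by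
  have h := dotProduct_mulVec (fun _ : n => (1 : R)) Aᵀ y
  rw [vecMul_transpose, hA, zero_dotProduct] at h
  simpa [dotProduct] using h

end Compression

theorem dotProduct_ofLp_self_eq_norm_sq {n : Type*} [Fintype n] (v : EuclideanSpace ℝ n) :
    v.ofLp ⬝ᵥ v.ofLp = ‖v‖ ^ 2 := by
  rw [← real_inner_self_eq_norm_sq, EuclideanSpace.inner_eq_star_dotProduct, star_trivial]

theorem dotProduct_diagonal_mulVec_le {n R : Type*} [Fintype n] [DecidableEq n] [CommRing R]
    [LinearOrder R] [IsStrictOrderedRing R] {d : n → R} {δ : R} (hd : ∀ i, d i ≤ δ)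
    (x : n → R) : x ⬝ᵥ diagonal d *ᵥ x ≤ δ * (x ⬝ᵥ x) := by
  simp only [dotProduct, mulVec_diagonal, mul_sum]
  refine sum_le_sum fun i _ => ?_
  nlinarith [mul_le_mul_of_nonneg_right (hd i) (mul_self_nonneg (x i))]

theorem euclNorm_eq_sqrt_dotProduct {n : Type*} [Fintype n] (x : n → ℝ) :
    euclNorm x = √(x ⬝ᵥ x) := by
  simp [euclNorm, dotProduct, sq]

theorem lambda2_le_dotProduct_mulVec {N : ℕ} {L : Matrix (Fin N) (Fin N) ℝ}
    (hL : L.PosSemidef) {v : Fin N → ℝ} (hv : euclNorm v = 1) (hsum : ∑ i, v i = 0) :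
    lambda2 L ≤ v ⬝ᵥ L *ᵥ v := by
  refine csInf_le ⟨0, ?_⟩ ⟨v, hv, hsum, rfl⟩
  rintro r ⟨w, -, -, rfl⟩
  simpa using hL.dotProduct_mulVec_nonneg w

theorem dotProduct_neg_add_diagonal_mulVec_le {N : ℕ} {Lsym Lbar : Matrix (Fin N) (Fin N) ℝ}
    (hLbar : Lbar.PosSemidef) (hdiff : (Lsym - Lbar).PosSemidef) {d : Fin N → ℝ} {δ : ℝ}
    (hd : ∀ i, d i ≤ δ) {x : Fin N → ℝ} (hx : x ⬝ᵥ x = 1) (hsum : ∑ i, x i = 0) :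
    x ⬝ᵥ (-Lsym + diagonal d) *ᵥ x ≤ -(lambda2 Lbar - δ) := by
  have hlambda2 : lambda2 Lbar ≤ x ⬝ᵥ Lbar *ᵥ x :=
    lambda2_le_dotProduct_mulVec hLbar (by simp [euclNorm_eq_sqrt_dotProduct, hx]) hsum
  have hLbar_le_Lsym : x ⬝ᵥ Lbar *ᵥ x ≤ x ⬝ᵥ Lsym *ᵥ x := by
    have := hdiff.dotProduct_mulVec_nonneg x
    simp only [star_trivial, sub_mulVec, dotProduct_sub] at this
    linarith
  have hΔ := dotProduct_diagonal_mulVec_le hd x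
  rw [hx, mul_one] at hΔ
  rw [add_mulVec, dotProduct_add, neg_mulVec, dotProduct_neg]
  linarith

theorem stmt6_general {N : ℕ} [NeZero (N - 1)]
    (Rθ : Matrix (Fin (N - 1)) (Fin N) ℝ)
    (hortho : Rθ * Rθᵀ = 1)
    (hperp : Rθ.mulVec (fun _ => 1) = 0)
    (Lsym Lbar : Matrix (Fin N) (Fin N) ℝ)
    (hLbarPSD : Lbar.PosSemidef)
    (hdiff : (Lsym - Lbar).PosSemidef)
    (d : Fin N → ℝ) (δ : ℝ) (hd : ∀ i, d i ≤ δ)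
    (hgap : lambda2 Lbar > δ)
    (hproj : (Rθ * (-Lsym + Matrix.diagonal d) * Rθᵀ).IsHermitian) :
    lamMax hproj ≤ -(lambda2 Lbar - δ) ∧ -(lambda2 Lbar - δ) < 0 := by
  refine ⟨ciSup_le fun i => ?_, by linarith⟩
  set y : Fin (N - 1) → ℝ := ⇑(hproj.eigenvectorBasis i)
  have hy : y ⬝ᵥ y = 1 := by
    rw [dotProduct_ofLp_self_eq_norm_sq, hproj.eigenvectorBasis.orthonormal.1 i, one_pow]
  calc hproj.eigenvalues i = y ⬝ᵥ (Rθ * (-Lsym + diagonal d) * Rθᵀ) *ᵥ y := by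
        simpa using hproj.eigenvalues_eq i
    _ = (Rθᵀ *ᵥ y) ⬝ᵥ (-Lsym + diagonal d) *ᵥ (Rθᵀ *ᵥ y) :=
        dotProduct_mulVec_mul_mul_transpose _ _ _
    _ ≤ -(lambda2 Lbar - δ) :=
        dotProduct_neg_add_diagonal_mulVec_le hLbarPSD hdiff hd
          (by rw [dotProduct_self_transpose_mulVec hortho, hy])
          (sum_transpose_mulVec_eq_zero hperp y)

theorem stmt6 {N : ℕ} [NeZero N] [NeZero (N - 1)]
    (Rθ : Matrix (Fin (N - 1)) (Fin N) ℝ)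
    (hortho : Rθ * Rθᵀ = 1)
    (hperp : Rθ.mulVec (fun _ => 1) = 0)
    (Lsym Lbar : Matrix (Fin N) (Fin N) ℝ)
    (hLsym : Lsym.IsHermitian) (hLsymPSD : Lsym.PosSemidef)
    (hLsym1 : Lsym.mulVec (fun _ => 1) = 0)
    (hLbar : Lbar.IsHermitian) (hLbarPSD : Lbar.PosSemidef)
    (hLbar1 : Lbar.mulVec (fun _ => 1) = 0)
    (hdiff : (Lsym - Lbar).PosSemidef)
    (d : Fin N → ℝ) (δ : ℝ) (hd : ∀ i, d i ≤ δ)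
    (hgap : lambda2 Lbar > δ)
    (hproj : (Rθ * (-Lsym + Matrix.diagonal d) * Rθᵀ).IsHermitian) :
    lamMax hproj ≤ -(lambda2 Lbar - δ) ∧ -(lambda2 Lbar - δ) < 0 :=
  stmt6_general Rθ hortho hperp Lsym Lbar hLbarPSD hdiff d δ hd hgap hproj
end
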